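/- For every nonzero v ∈ V, the function F² is twice continuously differentiable on a neighborhood of v, and the fundamental tensor g_v, defined as the symmetric bilinear form g_v(u,w) := (1/2)·∂²/∂δ∂η [F(v + δu + ηw)²] evaluated at δ = η = 0, is positive definite on V. Hence F is a Minkowski norm on V whose unit sphere is the ellipsoid {v : h(v − W, v − W) = 1} (the translate by W of the h-unit sphere). -/

import Mathlib

/-!
Write `Λ = 1 - h(W,W)` and `S(x,y) = Λ h(x,y) + h(x,W) h(y,W)`, a positive definite form, so that
`F x = (√S(x,x) - h(x,W)) / Λ`; this is smooth away from `0` and positively homogeneous.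
Along a line `f t = F (v + t u)` one has `(f²)'' = 2 (f'² + f f'')` with
`f'' = (S(u,u) S(v,v) - S(v,u)²) / (Λ S(v,v)^{3/2}) ≥ 0` by Cauchy–Schwarz, strictly unless
`u = c v`, and then `f' = c f ≠ 0`. Symmetry of the fundamental tensor is the symmetry of the
second derivative of the `C²` function `F²`. Finally `F x = y > 0` iff `h(x - yW, x - yW) = y²`
(the point `x` is reached at time `y` when navigating with wind `W`), and `y = 1` gives the ellipsoid.
-/

open LinearMap (BilinForm)
open Topology

section SecondDerivative

variable {E F : Type*} [NormedAddCommGroup E] [NormedSpace ℝ E]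
  [NormedAddCommGroup F] [NormedSpace ℝ F]

theorem deriv_deriv_add_smul_add_smul {f : E → F} {x : E} (hf : ContDiffAt ℝ 2 f x) (u w : E) :
    deriv (fun δ : ℝ => deriv (fun η : ℝ => f (x + δ • u + η • w)) 0) 0 =
      fderiv ℝ (fderiv ℝ f) x u w := by
  have hline (y v : E) : HasDerivAt (fun s : ℝ => y + s • v) v 0 := by
    simpa using ((hasDerivAt_id (0 : ℝ)).smul_const v).const_add y
  have hdiff : ∀ᶠ δ : ℝ in 𝓝 0, DifferentiableAt ℝ f (x + δ • u) := by
    have := (hline x u).continuousAt.tendsto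
    simp only [zero_smul, add_zero] at this
    exact this.eventually ((hf.eventually (by simp)).mono fun y hy =>
      hy.differentiableAt (by norm_num))
  have hinner : (fun δ : ℝ => deriv (fun η : ℝ => f (x + δ • u + η • w)) 0)
      =ᶠ[𝓝 0] fun δ => fderiv ℝ f (x + δ • u) w := by
    filter_upwards [hdiff] with δ hδ
    exact (hδ.hasFDerivAt.comp_hasDerivAt_of_eq 0 (hline (x + δ • u) w) (by simp)).deriv
  have hf' : DifferentiableAt ℝ (fderiv ℝ f) x :=
    (hf.fderiv_right (m := 1) (by norm_num)).differentiableAt (by norm_num)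
  rw [hinner.deriv_eq]
  have := (hf'.hasFDerivAt.comp_hasDerivAt_of_eq 0 (hline x u) (by simp)).clm_apply
    (hasDerivAt_const (0 : ℝ) w)
  simpa using this.deriv

theorem deriv_deriv_sq {f f' : ℝ → ℝ} {f'' t : ℝ} (hf : ∀ᶠ s in 𝓝 t, HasDerivAt f (f' s) s)
    (hf' : HasDerivAt f' f'' t) :
    deriv (deriv fun s => f s ^ 2) t = 2 * (f' t ^ 2 + f t * f'') := by
  have h1 : deriv (fun s => f s ^ 2) =ᶠ[𝓝 t] fun s => 2 * f s * f' s := by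
    filter_upwards [hf] with s hs
    simpa using (hs.fun_pow 2).deriv
  rw [h1.deriv_eq, ((hf.self_of_nhds.const_mul 2).fun_mul hf').deriv]
  ring

end SecondDerivative

theorem deriv_deriv_add_smul_add_smul_self {V F : Type*} [AddCommGroup V] [Module ℝ V]
    [NormedAddCommGroup F] [NormedSpace ℝ F] (g : V → F) (x u : V) :
    deriv (fun δ : ℝ => deriv (fun η : ℝ => g (x + δ • u + η • u)) 0) 0 =
      deriv (deriv fun t : ℝ => g (x + t • u)) 0 := by
  simp_rw [add_assoc, ← add_smul]
  congr 1
  funext δ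
  simpa using deriv_comp_const_add (fun t : ℝ => g (x + t • u)) δ 0

namespace LinearMap.BilinForm

variable {V : Type*} [AddCommGroup V] [Module ℝ V] {B : BilinForm ℝ V}

theorem hasDerivAt_apply_add_smul (x u y : V) (t : ℝ) :
    HasDerivAt (fun s : ℝ => B (x + s • u) y) (B u y) t := by
  simp only [map_add, map_smul, LinearMap.add_apply, LinearMap.smul_apply, smul_eq_mul]
  simpa using ((hasDerivAt_id t).mul_const (B u y)).const_add (B x y)

theorem hasDerivAt_apply_self_add_smul (hB : B.IsSymm) (x u : V) (t : ℝ) :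
    HasDerivAt (fun s : ℝ => B (x + s • u) (x + s • u)) (2 * B (x + t • u) u) t := by
  have hpoly : (fun s : ℝ => B (x + s • u) (x + s • u)) =
      fun s => B x x + s * (2 * B x u) + s ^ 2 * B u u := by
    funext s
    simp only [map_add, map_smul, LinearMap.add_apply, LinearMap.smul_apply, smul_eq_mul, hB.eq u x]
    ring
  rw [hpoly]
  refine ((((hasDerivAt_id t).mul_const _).const_add _).fun_add
    ((hasDerivAt_pow 2 t).mul_const _)).congr_deriv ?_
  simp only [map_add, map_smul, LinearMap.add_apply, LinearMap.smul_apply, smul_eq_mul]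
  ring

theorem hasDerivAt_sqrt_apply_self_add_smul (hB : B.IsSymm) {x u : V} {t : ℝ}
    (ht : 0 < B (x + t • u) (x + t • u)) :
    HasDerivAt (fun s : ℝ => √(B (x + s • u) (x + s • u)))
      (B (x + t • u) u / √(B (x + t • u) (x + t • u))) t := by
  convert (hasDerivAt_apply_self_add_smul hB x u t).sqrt ht.ne' using 1
  field_simp

theorem hasDerivAt_apply_add_smul_div_sqrt (hB : B.IsSymm) {x : V} (u : V) (hx : 0 < B x x) :
    HasDerivAt (fun s : ℝ => B (x + s • u) u / √(B (x + s • u) (x + s • u)))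
      ((B u u * B x x - B x u ^ 2) / √(B x x) ^ 3) 0 := by
  have hx' : 0 < B (x + (0 : ℝ) • u) (x + (0 : ℝ) • u) := by simpa using hx
  refine ((hasDerivAt_apply_add_smul (B := B) x u u 0).fun_div
    (hasDerivAt_sqrt_apply_self_add_smul hB hx') (Real.sqrt_pos.2 hx').ne').congr_deriv ?_
  have hN := Real.sq_sqrt hx.le
  have hN0 := Real.sqrt_pos.2 hx
  simp only [zero_smul, add_zero]
  field_simp
  rw [hN]

end LinearMap.BilinForm

section Randers

variable {V : Type*} [AddCommGroup V] [Module ℝ V] (h : BilinForm ℝ V) (W : V)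

noncomputable def navigationForm : BilinForm ℝ V :=
  (1 - h W W) • h + (h.flip W).smulRight (h.flip W)

noncomputable def randersNorm (x : V) : ℝ :=
  (√(navigationForm h W x x) - h x W) / (1 - h W W)

variable {h W}

theorem navigationForm_apply (x y : V) :
    navigationForm h W x y = (1 - h W W) * h x y + h x W * h y W := by
  simp [navigationForm]

theorem navigationForm_isSymm (hh : h.IsSymm) : (navigationForm h W).IsSymm :=
  ⟨fun x y => by simp only [navigationForm_apply, hh.eq x y]; ring⟩

theorem navigationForm_pos (hpos : ∀ x, x ≠ 0 → 0 < h x x) (hW : h W W < 1) {x : V}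
    (hx : x ≠ 0) : 0 < navigationForm h W x x := by
  rw [navigationForm_apply]
  nlinarith [hpos x hx, mul_self_nonneg (h x W)]

theorem randersNorm_pos (hpos : ∀ x, x ≠ 0 → 0 < h x x) (hW : h W W < 1) {x : V}
    (hx : x ≠ 0) : 0 < randersNorm h W x := by
  have hlt : h x W ^ 2 < navigationForm h W x x := by
    rw [navigationForm_apply]
    nlinarith [mul_pos (sub_pos.2 hW) (hpos x hx)]
  exact div_pos (sub_pos.2 (Real.lt_sqrt_of_sq_lt hlt)) (sub_pos.2 hW)

theorem randersNorm_smul {c : ℝ} (hc : 0 ≤ c) (x : V) :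
    randersNorm h W (c • x) = c * randersNorm h W x := by
  simp only [randersNorm, map_smul, LinearMap.smul_apply, smul_eq_mul]
  rw [← mul_assoc, Real.sqrt_mul (mul_self_nonneg c), Real.sqrt_mul_self hc]
  ring

theorem randersNorm_eq_iff (hh : h.IsSymm) (hpsd : ∀ x, 0 ≤ h x x) (hW : h W W < 1)
    {x : V} {y : ℝ} (hy : 0 < y) :
    randersNorm h W x = y ↔ h (x - y • W) (x - y • W) = y ^ 2 := by
  have hΛ : 0 < 1 - h W W := sub_pos.2 hW
  have hS : 0 ≤ navigationForm h W x x := by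
    rw [navigationForm_apply]
    nlinarith [hpsd x, mul_self_nonneg (h x W)]
  set a := y * (1 - h W W) + h x W
  have hexpand : navigationForm h W x x - a ^ 2 =
      (1 - h W W) * (h (x - y • W) (x - y • W) - y ^ 2) := by
    simp only [a, navigationForm_apply, map_sub, map_smul, LinearMap.sub_apply,
      LinearMap.smul_apply, smul_eq_mul, hh.eq W x]
    ring
  rw [randersNorm, div_eq_iff hΛ.ne', sub_eq_iff_eq_add]
  constructor
  · intro hsqrt
    have : navigationForm h W x x = a ^ 2 := by rw [← Real.sq_sqrt hS, hsqrt]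
    rw [this, sub_self, zero_eq_mul] at hexpand
    exact sub_eq_zero.1 (hexpand.resolve_left hΛ.ne')
  · intro hsphere
    -- Cauchy-Schwarz gives `|h (x - y • W) W| ≤ y √(h W W) < y`, hence `a > 0`.
    have ha_eq : a = y + h (x - y • W) W := by
      simp only [a, map_sub, map_smul, LinearMap.sub_apply, LinearMap.smul_apply, smul_eq_mul]
      ring
    have hCS := h.apply_sq_le_of_symm hpsd (LinearMap.BilinForm.isSymm_iff.1 hh) (x - y • W) W
    rw [hsphere] at hCS
    have ha : 0 < a := by
      rw [ha_eq]
      nlinarith [mul_pos (pow_pos hy 2) hΛ]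
    rw [hsphere, sub_self, mul_zero, sub_eq_zero] at hexpand
    rw [hexpand, Real.sqrt_sq ha.le]

theorem hasDerivAt_randersNorm_add_smul (hh : h.IsSymm) {v u : V} {t : ℝ}
    (ht : 0 < navigationForm h W (v + t • u) (v + t • u)) :
    HasDerivAt (fun s : ℝ => randersNorm h W (v + s • u))
      ((navigationForm h W (v + t • u) u / √(navigationForm h W (v + t • u) (v + t • u))
        - h u W) / (1 - h W W)) t :=
  (((navigationForm h W).hasDerivAt_sqrt_apply_self_add_smul (navigationForm_isSymm hh) ht).sub
    (LinearMap.BilinForm.hasDerivAt_apply_add_smul v u W t)).div_const _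

theorem deriv_deriv_randersNorm_sq_add_smul (hh : h.IsSymm) {v : V} (u : V)
    (hv : 0 < navigationForm h W v v) :
    deriv (deriv fun t : ℝ => randersNorm h W (v + t • u) ^ 2) 0 =
      2 * (((navigationForm h W v u / √(navigationForm h W v v) - h u W) / (1 - h W W)) ^ 2 +
        randersNorm h W v * ((navigationForm h W u u * navigationForm h W v v
          - navigationForm h W v u ^ 2) / √(navigationForm h W v v) ^ 3 / (1 - h W W))) := by
  have hS := navigationForm_isSymm (W := W) hh
  have hev : ∀ᶠ t : ℝ in 𝓝 0, 0 < navigationForm h W (v + t • u) (v + t • u) :=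
    ((navigationForm h W).hasDerivAt_apply_self_add_smul hS v u 0).continuousAt.eventually
      (lt_mem_nhds (by simpa using hv))
  rw [deriv_deriv_sq (hev.mono fun t ht => hasDerivAt_randersNorm_add_smul hh ht)
    ((((navigationForm h W).hasDerivAt_apply_add_smul_div_sqrt hS u hv).sub_const
      (h u W)).div_const _)]
  simp only [zero_smul, add_zero]

theorem deriv_deriv_randersNorm_sq_add_smul_pos (hh : h.IsSymm)
    (hpos : ∀ x, x ≠ 0 → 0 < h x x) (hW : h W W < 1) {v u : V} (hv : v ≠ 0) (hu : u ≠ 0) :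
    0 < deriv (deriv fun t : ℝ => randersNorm h W (v + t • u) ^ 2) 0 := by
  have hv0 := navigationForm_pos hpos hW hv
  rw [deriv_deriv_randersNorm_sq_add_smul hh u hv0]
  set S := navigationForm h W
  have hS : LinearMap.IsSymm S := LinearMap.BilinForm.isSymm_iff.1 (navigationForm_isSymm hh)
  have hSpos : ∀ x, x ≠ 0 → 0 < S x x := fun x => navigationForm_pos hpos hW
  have hSpsd : ∀ x, 0 ≤ S x x := fun x => by
    obtain rfl | hx := eq_or_ne x 0
    · simp
    · exact (hSpos x hx).le
  have hΛ : 0 < 1 - h W W := sub_pos.2 hW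
  have hF := randersNorm_pos hpos hW hv
  have hCS := S.apply_sq_le_of_symm hSpsd hS v u
  have hf'' : 0 ≤ (S u u * S v v - S v u ^ 2) / √(S v v) ^ 3 / (1 - h W W) :=
    div_nonneg (div_nonneg (by nlinarith) (by positivity)) hΛ.le
  by_cases hind : LinearIndependent ℝ ![v, u]
  · have hlt := (S.apply_sq_lt_iff_linearIndependent_of_symm hSpos hS v u).2 hind
    have hf''pos : 0 < (S u u * S v v - S v u ^ 2) / √(S v v) ^ 3 / (1 - h W W) :=
      div_pos (div_pos (by nlinarith) (by positivity)) hΛ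
    nlinarith [mul_pos hF hf''pos]
  · obtain ⟨c, rfl⟩ : ∃ c : ℝ, c • v = u := by
      simpa [LinearIndependent.pair_iff' hv] using hind
    have hc : c ≠ 0 := by
      rintro rfl
      simp at hu
    have hf' : (S v (c • v) / √(S v v) - h (c • v) W) / (1 - h W W) = c * randersNorm h W v := by
      have hSN : S v v / √(S v v) = √(S v v) := by
        rw [div_eq_iff (Real.sqrt_pos.2 hv0).ne', Real.mul_self_sqrt hv0.le]
      simp only [randersNorm, map_smul, LinearMap.smul_apply, smul_eq_mul, mul_div_assoc, hSN]
      ring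
    have hcF : 0 < (c * randersNorm h W v) ^ 2 := by positivity
    rw [hf']
    nlinarith [mul_nonneg hF.le hf'']

end Randers

section Smoothness

variable {V : Type*} [NormedAddCommGroup V] [NormedSpace ℝ V] [FiniteDimensional ℝ V]
  {h : BilinForm ℝ V} {W : V}

theorem contDiffAt_randersNorm (hpos : ∀ x, x ≠ 0 → 0 < h x x) (hW : h W W < 1) {x : V}
    (hx : x ≠ 0) {n : WithTop ℕ∞} : ContDiffAt ℝ n (randersNorm h W) x := by
  have hS : ContDiff ℝ n fun y => navigationForm h W y y := by
    simpa using (navigationForm h W).toContinuousBilinearMap.contDiff.clm_apply contDiff_id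
  have hβ : ContDiff ℝ n fun y => h y W := by
    simpa using h.toContinuousBilinearMap.contDiff.clm_apply contDiff_const
  exact ((hS.contDiffAt.sqrt (navigationForm_pos hpos hW hx).ne').sub hβ.contDiffAt).div_const _

end Smoothness

/-- For every nonzero `v`, `F²` is `C²` near `v` and the fundamental tensor
`g_v(u,w) = (1/2)∂²_{δη}F(v + δu + ηw)²|₀` is positive definite; hence the Randers norm
`F` with Zermelo data `(h, W)` is a Minkowski norm (positive and positively homogeneous
on nonzero vectors) whose unit sphere is the ellipsoid `{x : h(x − W, x − W) = 1}`. -/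
theorem stmt_4 {V : Type*} [NormedAddCommGroup V] [NormedSpace ℝ V]
    [FiniteDimensional ℝ V]
    (h : V →ₗ[ℝ] V →ₗ[ℝ] ℝ)
    (hsymm : ∀ x y : V, h x y = h y x)
    (hposdef : ∀ x : V, x ≠ 0 → 0 < h x x)
    (W : V) (hW : h W W < 1)
    (Λ : ℝ) (hΛ : Λ = 1 - h W W)
    (F : V → ℝ)
    (hF : ∀ v : V, F v = (-(h v W) + Real.sqrt ((h v W) ^ 2 + Λ * h v v)) / Λ) :
    (∀ v : V, v ≠ 0 →
      ContDiffAt ℝ 2 (fun x : V => F x ^ 2) v ∧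
      (∀ u w : V,
        (1 / 2) * deriv (fun δ : ℝ =>
            deriv (fun η : ℝ => F (v + δ • u + η • w) ^ 2) 0) 0 =
        (1 / 2) * deriv (fun δ : ℝ =>
            deriv (fun η : ℝ => F (v + δ • w + η • u) ^ 2) 0) 0) ∧
      (∀ u : V, u ≠ 0 →
        0 < (1 / 2) * deriv (fun δ : ℝ =>
            deriv (fun η : ℝ => F (v + δ • u + η • u) ^ 2) 0) 0) ∧
      0 < F v ∧
      (∀ c : ℝ, 0 < c → F (c • v) = c * F v)) ∧
    {x : V | F x = 1} = {x : V | h (x - W) (x - W) = 1} := by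
  have hh : LinearMap.BilinForm.IsSymm h := ⟨hsymm⟩
  have hpsd : ∀ x, 0 ≤ h x x := fun x => by
    obtain rfl | hx := eq_or_ne x 0
    · simp
    · exact (hposdef x hx).le
  obtain rfl : F = randersNorm h W := funext fun x => by
    rw [hF, randersNorm, navigationForm_apply, hΛ]
    ring_nf
  refine ⟨fun v hv => ?_, ?_⟩
  · have hC2 : ContDiffAt ℝ 2 (fun x => randersNorm h W x ^ 2) v :=
      (contDiffAt_randersNorm hposdef hW hv).pow 2
    refine ⟨hC2, fun u w => ?_, fun u hu => ?_, randersNorm_pos hposdef hW hv,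
      fun c hc => randersNorm_smul hc.le v⟩
    · rw [deriv_deriv_add_smul_add_smul hC2, deriv_deriv_add_smul_add_smul hC2,
        hC2.isSymmSndFDerivAt (by simp) u w]
    · rw [deriv_deriv_add_smul_add_smul_self (fun x => randersNorm h W x ^ 2)]
      exact mul_pos one_half_pos (deriv_deriv_randersNorm_sq_add_smul_pos hh hposdef hW hv hu)
  · ext x
    simpa using randersNorm_eq_iff hh hpsd hW (x := x) one_pos
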